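/- Let $e_1,\dots,e_{n+1}$ be i.i.d. random variables whose common distribution is atomless (continuous). Let $\hat q$ be the $k$-th order statistic of $e_1,\dots,e_n$ where $k=\lceil (n+1)(1-\alpha)\rceil \le n$. Then $\mathbb{P}[e_{n+1} \le \hat q] \le 1-\alpha + \frac{1}{n+1}$. -/

import Mathlib

open MeasureTheory ProbabilityTheory

/-- The `k`-th smallest element of a list of reals (1-indexed). -/
noncomputable def orderStat (l : List ℝ) (k : ℕ) : ℝ :=
  (l.insertionSort (· ≤ ·)).getD (k - 1) 0

/-!
If `e (n+1)` is at most the `k`-th smallest of the first `n` scores, fewer than `k` of all `n + 1`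
scores lie strictly below it. By exchangeability each of the `n + 1` scores has this property with
the same probability, and since ties are null, almost surely at most `k` of them have it. Hence the
coverage is at most `k / (n + 1)`, and `k < (n + 1)(1 - α) + 1`.
-/

open Finset
open scoped ENNReal

lemma List.countP_ofFn {α : Type*} {m : ℕ} (f : Fin m → α) (p : α → Prop) [DecidablePred p] :
    (List.ofFn f).countP (fun x => decide (p x)) = #{i | p (f i)} := by
  rw [← Multiset.coe_countP, ← Fin.univ_val_map, Multiset.countP_map]
  rfl

lemma countP_lt_of_le_orderStat {l : List ℝ} {k : ℕ} (hk1 : 1 ≤ k) (hkl : k ≤ l.length) {x : ℝ}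
    (hx : x ≤ orderStat l k) : l.countP (· < x) < k := by
  set s := l.insertionSort (· ≤ ·)
  have hsorted : s.Pairwise (· ≤ ·) := List.pairwise_insertionSort _ l
  have hk : k - 1 < s.length := by simp only [s, List.length_insertionSort]; omega
  have hxs : x ≤ s[k - 1] := by rwa [orderStat, List.getD_eq_getElem _ _ hk] at hx
  have hdrop : (s.drop (k - 1)).countP (· < x) = 0 := by
    have htail := hsorted.sublist (List.drop_sublist (k - 1) s)
    rw [List.drop_eq_getElem_cons hk, List.pairwise_cons] at htail
    rw [List.drop_eq_getElem_cons hk, List.countP_eq_zero]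
    rintro y (_ | ⟨_, hy⟩)
    · simpa using hxs
    · simpa using hxs.trans (htail.1 y hy)
  have hperm : s.Perm l := List.perm_insertionSort _ l
  rw [← hperm.countP_eq, ← List.take_append_drop (k - 1) s, List.countP_append, hdrop]
  have := (s.take (k - 1)).countP_le_length (p := fun y => decide (y < x))
  simp only [List.length_take] at this
  omega

section Rank

variable {ι β : Type*} [Fintype ι] [LinearOrder β]

def rank (v : ι → β) (i : ι) : ℕ := #{j | v j < v i}

lemma rank_lt_rank {v : ι → β} {i j : ι} (h : v i < v j) : rank v i < rank v j := by
  refine card_lt_card ((ssubset_iff_of_subset fun l hl => ?_).2 ⟨i, ?_, ?_⟩)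
  · simp only [mem_filter, mem_univ, true_and] at hl ⊢
    exact hl.trans h
  · simpa using h
  · simp

lemma rank_injective {v : ι → β} (hv : Function.Injective v) : Function.Injective (rank v) := by
  intro i j hij
  by_contra hne
  rcases lt_or_gt_of_ne (hv.ne hne) with h | h
  · exact (rank_lt_rank h).ne hij
  · exact (rank_lt_rank h).ne' hij

lemma card_rank_lt_le {v : ι → β} (hv : Function.Injective v) (k : ℕ) :
    #{i | rank v i < k} ≤ k := by
  simpa using card_le_card_of_injOn (t := range k) (rank v) (fun i hi => by simpa using hi)
    (rank_injective hv).injOn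

lemma rank_comp_equiv (v : ι → β) (σ : ι ≃ ι) (i : ι) : rank (v ∘ σ) i = rank v (σ i) := by
  simp only [rank, card_filter, Function.comp_apply]
  exact Equiv.sum_comp σ fun j => if v j < v (σ i) then 1 else 0

lemma rank_last_eq_countP {n : ℕ} (v : Fin (n + 1) → β) :
    rank v (Fin.last n) =
      (List.ofFn fun i : Fin n => v i.castSucc).countP (· < v (Fin.last n)) := by
  rw [List.countP_ofFn, rank, card_filter, card_filter, Fin.sum_univ_castSucc]
  simp

end Rank

lemma measurable_rank {ι : Type*} [Fintype ι] (i : ι) : Measurable fun v : ι → ℝ => rank v i := by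
  simp only [rank, card_filter]
  exact Finset.measurable_sum _ fun j _ => Measurable.ite
    (measurableSet_lt (measurable_pi_apply j) (measurable_pi_apply i)) measurable_const
    measurable_const

lemma measurableSet_rank_lt {ι : Type*} [Fintype ι] (i : ι) (k : ℕ) :
    MeasurableSet {v : ι → ℝ | rank v i < k} :=
  measurable_rank i measurableSet_Iio

lemma measurePreserving_comp_perm_pi {ι β : Type*} [Fintype ι] [MeasurableSpace β]
    (μ : Measure β) [SigmaFinite μ] (σ : Equiv.Perm ι) :
    MeasurePreserving (fun v : ι → β => v ∘ σ) (Measure.pi fun _ => μ) (Measure.pi fun _ => μ) := by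
  convert measurePreserving_piCongrLeft (fun _ : ι => μ) σ.symm using 1
  funext v j
  rw [MeasurableEquiv.coe_piCongrLeft, Equiv.piCongrLeft_apply_eq_cast]
  simp

lemma measure_rank_lt_le {ι : Type*} [Fintype ι] (ν : Measure (ι → ℝ)) [IsProbabilityMeasure ν]
    (hexch : ∀ σ : Equiv.Perm ι, MeasurePreserving (fun v => v ∘ σ) ν ν)
    (hties : ∀ i j, i ≠ j → ν {v | v i = v j} = 0) (i : ι) (k : ℕ) :
    ν {v | rank v i < k} ≤ k / Fintype.card ι := by
  classical
  have hsame : ∀ j, ν {v | rank v j < k} = ν {v | rank v i < k} := by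
    intro j
    rw [← (hexch (Equiv.swap i j)).measure_preimage (measurableSet_rank_lt i k).nullMeasurableSet]
    congr 1
    ext v
    simp [rank_comp_equiv]
  have hinj : ∀ᵐ v ∂ν, Function.Injective v := by
    have : ∀ᵐ v ∂ν, ∀ a b, a ≠ b → v a ≠ v b := by
      simp only [ae_all_iff]
      intro a b hab
      exact measure_eq_zero_iff_ae_notMem.1 (hties a b hab)
    exact this.mono fun v hv a b hab => by_contra fun hne => hv a b hne hab
  have : Nonempty ι := ⟨i⟩
  rw [ENNReal.le_div_iff_mul_le (by simp) (by simp), mul_comm]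
  calc (Fintype.card ι : ℝ≥0∞) * ν {v | rank v i < k} = ∑ j, ν {v | rank v j < k} := by
        simp [hsame]
    _ = ∫⁻ v, ∑ j, {v | rank v j < k}.indicator 1 v ∂ν := by
        rw [lintegral_finsetSum _ fun j _ => measurable_one.indicator (measurableSet_rank_lt j k)]
        simp [lintegral_indicator_one (measurableSet_rank_lt _ k)]
    _ ≤ ∫⁻ _, (k : ℝ≥0∞) ∂ν := lintegral_mono_ae <| hinj.mono fun v hv => by
        simpa [Set.indicator_apply] using card_rank_lt_le hv k
    _ = k := by simp

lemma ProbabilityTheory.IndepFun.measure_eq_eq_zero {Ω β : Type*} [MeasurableSpace Ω]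
    [MeasurableSpace β] [MeasurableEq β] {μ : Measure Ω} [IsFiniteMeasure μ] {X Y : Ω → β}
    (hXY : IndepFun X Y μ) (hX : Measurable X) (hY : Measurable Y)
    [NullSingletonClass (μ.map Y)] : μ {ω | X ω = Y ω} = 0 := by
  have hdiag : MeasurableSet {p : β × β | p.1 = p.2} :=
    measurableSet_eq_fun measurable_fst measurable_snd
  rw [show {ω | X ω = Y ω} = (fun ω => (X ω, Y ω)) ⁻¹' {p | p.1 = p.2} from rfl,
    ← Measure.map_apply (hX.prodMk hY) hdiag,
    (indepFun_iff_map_prod_eq_prod_map_map hX.aemeasurable hY.aemeasurable).1 hXY,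
    Measure.prod_apply hdiag]
  simp

lemma natCeil_mul_div_le {N α : ℝ} (hN : 0 < N) (hα : α ≤ 1) :
    (⌈N * (1 - α)⌉₊ : ℝ) / N ≤ 1 - α + 1 / N := by
  have := Nat.ceil_lt_add_one (mul_nonneg hN.le (sub_nonneg.2 hα))
  rw [div_le_iff₀ hN, add_mul, one_div_mul_cancel hN.ne']
  linarith

theorem conformal_coverage_upper_general
    {Ω : Type*} [MeasureSpace Ω] [IsProbabilityMeasure (ℙ : Measure Ω)]
    {n : ℕ} (α : ℝ) (hα1 : α < 1)
    (e : Fin (n + 1) → Ω → ℝ) (hmeas : ∀ i, Measurable (e i))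
    (hindep : iIndepFun e ℙ)
    (hident : ∀ i j, IdentDistrib (e i) (e j) ℙ ℙ)
    (hatomless : ∀ i (x : ℝ), Measure.map (e i) ℙ {x} = 0)
    (k : ℕ) (hk : k = ⌈((n : ℝ) + 1) * (1 - α)⌉₊) (hkn : k ≤ n)
    (qhat : Ω → ℝ)
    (hq : ∀ ω, qhat ω = orderStat (List.ofFn (fun i : Fin n => e i.castSucc ω)) k) :
    ℙ {ω | e (Fin.last n) ω ≤ qhat ω} ≤ ENNReal.ofReal (1 - α + 1 / ((n : ℝ) + 1)) := by
  have hk1 : 1 ≤ k := hk ▸ Nat.one_le_ceil_iff.2 (mul_pos (by positivity) (by linarith))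
  set X : Ω → Fin (n + 1) → ℝ := fun ω i => e i ω
  have hX : Measurable X := measurable_pi_lambda X hmeas
  have := Measure.isProbabilityMeasure_map (μ := ℙ) hX.aemeasurable
  have hlaw : Measure.map X ℙ = Measure.pi fun _ => Measure.map (e 0) ℙ := by
    rw [hindep.map_fun_eq_pi_map fun i => (hmeas i).aemeasurable]
    simp_rw [fun i => (hident i 0).map_eq]
  have hties : ∀ i j, i ≠ j → Measure.map X ℙ {v | v i = v j} = 0 := fun i j hij => by
    have : NullSingletonClass (Measure.map (e j) ℙ) := ⟨hatomless j⟩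
    rw [Measure.map_apply hX
      (measurableSet_eq_fun (measurable_pi_apply i) (measurable_pi_apply j))]
    exact (hindep.indepFun hij).measure_eq_eq_zero (hmeas i) (hmeas j)
  have hcover : {ω | e (Fin.last n) ω ≤ qhat ω} ⊆ X ⁻¹' {v | rank v (Fin.last n) < k} :=
    fun ω (hω : e (Fin.last n) ω ≤ qhat ω) => by
      rw [hq] at hω
      change rank (X ω) (Fin.last n) < k
      rw [rank_last_eq_countP]
      exact countP_lt_of_le_orderStat hk1 (by simpa using hkn) hω
  calc ℙ {ω | e (Fin.last n) ω ≤ qhat ω} ≤ Measure.map X ℙ {v | rank v (Fin.last n) < k} := by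
        rw [Measure.map_apply hX (measurableSet_rank_lt _ _)]
        exact measure_mono hcover
    _ ≤ k / (n + 1) := by
        simpa using measure_rank_lt_le (Measure.map X ℙ)
          (hlaw ▸ measurePreserving_comp_perm_pi _) hties (Fin.last n) k
    _ = ENNReal.ofReal (k / (n + 1)) := by
        rw [ENNReal.ofReal_div_of_pos (by positivity)]
        norm_cast
    _ ≤ _ := ENNReal.ofReal_le_ofReal (hk ▸ natCeil_mul_div_le (by positivity) hα1.le)

/-- Conformal coverage upper bound: for i.i.d. samples from an atomless
(continuous) distribution, the coverage probability is at most
`1 - α + 1/(n+1)`. -/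
theorem conformal_coverage_upper
    {Ω : Type*} [MeasureSpace Ω] [IsProbabilityMeasure (ℙ : Measure Ω)]
    {n : ℕ} (hn : 1 ≤ n) (α : ℝ) (hα : 0 < α) (hα1 : α < 1)
    (e : Fin (n + 1) → Ω → ℝ) (hmeas : ∀ i, Measurable (e i))
    (hindep : iIndepFun e ℙ)
    (hident : ∀ i j, IdentDistrib (e i) (e j) ℙ ℙ)
    (hatomless : ∀ i (x : ℝ), Measure.map (e i) ℙ {x} = 0)
    (k : ℕ) (hk : k = ⌈((n : ℝ) + 1) * (1 - α)⌉₊) (hkn : k ≤ n)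
    (qhat : Ω → ℝ)
    (hq : ∀ ω, qhat ω = orderStat (List.ofFn (fun i : Fin n => e i.castSucc ω)) k) :
    ℙ {ω | e (Fin.last n) ω ≤ qhat ω} ≤ ENNReal.ofReal (1 - α + 1 / ((n : ℝ) + 1)) :=
  conformal_coverage_upper_general α hα1 e hmeas hindep hident hatomless k hk hkn qhat hq
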